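/- arXiv:2202.02741 — 2 statements merged into one kernel-verified Lean document; each statement's English description precedes it below -/
import Mathlib

section
/- Let G be a finite simple undirected graph on vertex set V with Laplacian L(G), let F ⊆ V (the follower set) and let F̄ = V∖F (the leader set) be nonempty. Set A = L(G)_{F→F} (the principal submatrix of L(G) on rows and columns in F) and B = L(G)_{F→F̄} (rows in F, columns in F̄). Then the controllability matrix [B, AB, …, A^{|F|−1}B] has rank |F| if and only if every eigenvector y of L(G) satisfies y_{F̄} ≠ 0, i.e., there is no nonzero vector y ∈ ℝ^V and real λ with L(G)y = λy and y_v = 0 for all v ∈ F̄. -/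
/-!
By Cayley–Hamilton, the Kalman matrix `[B, AB, …, A^(n-1) B]` has full row rank iff the only
`z` with `zᵀ A^k B = 0` for all `k` is `z = 0`. These `z` form an `A`-invariant subspace, which
for symmetric `A` contains an eigenvector of `A` as soon as it is nonzero (Hautus test). Finally,
for `y` supported on `F` with restriction `z`, `L y = (A z, Bᵀ z)`, so eigenvectors `z` of
`A = L_{FF}` with `zᵀ B = 0` are exactly restrictions of eigenvectors of `L` vanishing on `Fᶜ`.
-/

open Matrix Polynomial

theorem LinearMap.IsSymmetric.exists_hasEigenvector_mem {𝕜 E : Type*} [RCLike 𝕜]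
    [NormedAddCommGroup E] [InnerProductSpace 𝕜 E] [FiniteDimensional 𝕜 E] {T : E →ₗ[𝕜] E}
    (hT : T.IsSymmetric) {W : Submodule 𝕜 E} (hW : ∀ w ∈ W, T w ∈ W) (hW₀ : W ≠ ⊥) :
    ∃ w ∈ W, ∃ μ : 𝕜, Module.End.HasEigenvector T μ w := by
  have : Nontrivial W := Submodule.nontrivial_iff_ne_bot.mpr hW₀
  obtain ⟨μ, hμ⟩ : ∃ μ : 𝕜, Module.End.HasEigenvalue (T.restrict hW) μ :=
    ⟨_, (hT.restrict_invariant hW).hasEigenvalue_iSup_of_finiteDimensional⟩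
  obtain ⟨w, hw⟩ := hμ.exists_hasEigenvector
  refine ⟨w, w.2, μ, Module.End.mem_eigenspace_iff.mpr ?_, by simpa using hw.2⟩
  simpa using congrArg Subtype.val (Module.End.mem_eigenspace_iff.mp hw.1)

namespace Matrix

variable {K m p : Type*} [Fintype m]

theorem IsHermitian.exists_mulVec_eq_smul_mem {𝕜 : Type*} [RCLike 𝕜] [DecidableEq m]
    {A : Matrix m m 𝕜} (hA : A.IsHermitian) {W : Submodule 𝕜 (m → 𝕜)}
    (hW : ∀ w ∈ W, A *ᵥ w ∈ W) (hW₀ : W ≠ ⊥) :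
    ∃ w ∈ W, w ≠ 0 ∧ ∃ μ : 𝕜, A *ᵥ w = μ • w := by
  let W' := W.comap (WithLp.linearEquiv 2 𝕜 (m → 𝕜)).toLinearMap
  have hW' : W' ≠ ⊥ := by
    obtain ⟨w, hw, hw₀⟩ := Submodule.exists_mem_ne_zero_of_ne_bot hW₀
    exact (Submodule.ne_bot_iff W').mpr ⟨WithLp.toLp 2 w, hw, by simpa using hw₀⟩
  obtain ⟨w, hw, μ, hwμ⟩ := (isSymmetric_toEuclideanLin_iff.mpr hA).exists_hasEigenvector_mem
    (fun w hw => hW _ hw) hW'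
  refine ⟨w.ofLp, hw, by simpa using hwμ.2, μ, ?_⟩
  simpa [toLpLin_apply] using congrArg WithLp.ofLp (Module.End.mem_eigenspace_iff.mp hwμ.1)

/-- The Kalman matrix `[B, AB, …, A^(n-1) B]`, its columns indexed by `(k, j) : Fin n × p`. -/
def controllabilityMatrix [Semiring K] [DecidableEq m] (n : ℕ) (A : Matrix m m K)
    (B : Matrix m p K) : Matrix m (Fin n × p) K :=
  of fun i q => (A ^ (q.1 : ℕ) * B) i q.2

theorem rank_eq_card_iff_forall_vecMul_eq_zero [Field K] [Fintype p] (M : Matrix m p K) :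
    M.rank = Fintype.card m ↔ ∀ z : m → K, z ᵥ* M = 0 → z = 0 := by
  rw [M.rank_eq_finrank_span_row, eq_comm, ← Set.finrank,
    ← linearIndependent_iff_card_eq_finrank_span, ← vecMul_injective_iff, ← coe_vecMulLinear,
    injective_iff_map_eq_zero]
  rfl

theorem vecMul_controllabilityMatrix_eq_zero_iff [Semiring K] [DecidableEq m] {n : ℕ}
    {A : Matrix m m K} {B : Matrix m p K} {z : m → K} :
    z ᵥ* controllabilityMatrix n A B = 0 ↔ ∀ k < n, z ᵥ* (A ^ k * B) = 0 := by
  refine ⟨fun h k hk => funext fun j => congrFun h (⟨k, hk⟩, j), fun h => ?_⟩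
  funext ⟨k, j⟩
  exact congrFun (h k k.2) j

theorem vecMul_pow_mul_eq_zero_of_forall_lt_card [CommRing K] [DecidableEq m]
    {A : Matrix m m K} {B : Matrix m p K} {z : m → K}
    (h : ∀ k < Fintype.card m, z ᵥ* (A ^ k * B) = 0) (k : ℕ) : z ᵥ* (A ^ k * B) = 0 := by
  rcases subsingleton_or_nontrivial K with hK | hK
  · exact Subsingleton.elim _ _
  rcases isEmpty_or_nonempty m with hm | hm
  · simp [Subsingleton.elim z 0]
  -- Cayley–Hamilton: `A ^ k` is a combination of the `A ^ i` with `i < card m`.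
  have hdeg : (X ^ k %ₘ A.charpoly).natDegree < Fintype.card m := by
    rw [← A.charpoly_natDegree_eq_dim]
    refine natDegree_modByMonic_lt _ A.charpoly_monic fun h1 => ?_
    have hdim := A.charpoly_natDegree_eq_dim
    rw [h1, natDegree_one] at hdim
    exact Fintype.card_ne_zero hdim.symm
  rw [A.pow_eq_aeval_mod_charpoly, aeval_eq_sum_range' hdeg, Matrix.sum_mul, vecMul_sum]
  refine Finset.sum_eq_zero fun i hi => ?_
  rw [smul_mul, vecMul_smul, h i (Finset.mem_range.mp hi), smul_zero]

theorem vecMul_pow_of_vecMul_eq_smul [CommSemiring K] [DecidableEq m] {A : Matrix m m K}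
    {z : m → K} {μ : K} (hz : z ᵥ* A = μ • z) (k : ℕ) : z ᵥ* A ^ k = μ ^ k • z := by
  induction k with
  | zero => simp
  | succ k ih => rw [pow_succ, ← vecMul_vecMul, ih, smul_vecMul, hz, smul_smul, pow_succ]

theorem rank_controllabilityMatrix_eq_card_iff [Field K] [Fintype p] [DecidableEq m]
    {n : ℕ} (hn : Fintype.card m ≤ n) (A : Matrix m m K) (B : Matrix m p K) :
    (controllabilityMatrix n A B).rank = Fintype.card m ↔
      ∀ z : m → K, (∀ k, z ᵥ* (A ^ k * B) = 0) → z = 0 := by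
  simp only [rank_eq_card_iff_forall_vecMul_eq_zero, vecMul_controllabilityMatrix_eq_zero_iff]
  exact forall_congr' fun z => imp_congr_left
    ⟨fun h => vecMul_pow_mul_eq_zero_of_forall_lt_card fun k hk => h k (hk.trans_le hn),
      fun h k _ => h k⟩

theorem IsSymm.rank_controllabilityMatrix_eq_card_iff [Fintype p] [DecidableEq m]
    {A : Matrix m m ℝ} (hA : A.IsSymm) (B : Matrix m p ℝ) {n : ℕ} (hn : Fintype.card m ≤ n) :
    (controllabilityMatrix n A B).rank = Fintype.card m ↔
      ¬ ∃ z : m → ℝ, z ≠ 0 ∧ ∃ μ : ℝ, A *ᵥ z = μ • z ∧ z ᵥ* B = 0 := by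
  have hvecMul (z : m → ℝ) : z ᵥ* A = A *ᵥ z := by rw [← vecMul_transpose, hA.eq]
  rw [Matrix.rank_controllabilityMatrix_eq_card_iff hn]
  constructor
  · rintro h ⟨z, hz₀, μ, hzμ, hzB⟩
    refine hz₀ (h z fun k => ?_)
    rw [← vecMul_vecMul, vecMul_pow_of_vecMul_eq_smul ((hvecMul z).trans hzμ), smul_vecMul, hzB,
      smul_zero]
  · intro h z hz
    by_contra hz₀
    -- `z` lies in this `A`-invariant subspace, which therefore contains an eigenvector of `A`.
    let W : Submodule ℝ (m → ℝ) := ⨅ k, LinearMap.ker (vecMulLinear (A ^ k * B))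
    have hmem (w : m → ℝ) : w ∈ W ↔ ∀ k, w ᵥ* (A ^ k * B) = 0 := by
      simp [W, Submodule.mem_iInf]
    have hW (w) (hw : w ∈ W) : A *ᵥ w ∈ W := (hmem _).mpr fun k => by
      rw [← hvecMul, vecMul_vecMul, ← Matrix.mul_assoc, ← pow_succ']
      exact (hmem w).mp hw (k + 1)
    have hW₀ : W ≠ ⊥ := (Submodule.ne_bot_iff W).mpr ⟨z, (hmem z).mpr hz, hz₀⟩
    obtain ⟨w, hw, hw₀, μ, hwμ⟩ :=
      (isHermitian_iff_isSymm.mpr hA).exists_mulVec_eq_smul_mem hW hW₀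
    exact h ⟨w, hw₀, μ, hwμ, by simpa using (hmem w).mp hw 0⟩

theorem submatrix_mulVec_comp_val [NonUnitalNonAssocSemiring K] {V ι : Type*} [Fintype V]
    [DecidableEq V] (L : Matrix V V K) (f : ι → V) {S : Finset V} {y : V → K}
    (hy : ∀ v ∈ Sᶜ, y v = 0) :
    L.submatrix f (↑) *ᵥ (y ∘ (↑) : S → K) = (L *ᵥ y) ∘ f := by
  funext i
  simp only [mulVec, dotProduct, submatrix_apply, Function.comp_apply]
  rw [Finset.sum_coe_sort S fun u => L (f i) u * y u]
  exact Finset.sum_subset (Finset.subset_univ S) fun u _ hu => by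
    rw [hy u (Finset.mem_compl.mpr hu), mul_zero]

theorem exists_eigenvector_vanishing_off_iff [Semiring K] {V : Type*} [Fintype V] [DecidableEq V]
    (L : Matrix V V K) (S : Finset V) :
    (∃ (y : V → K) (l : K), y ≠ 0 ∧ L *ᵥ y = l • y ∧ ∀ v ∈ Sᶜ, y v = 0) ↔
      ∃ z : S → K, z ≠ 0 ∧ ∃ μ : K, L.submatrix (↑) (↑) *ᵥ z = μ • z ∧
        (L.submatrix (↑) (↑) : Matrix (Sᶜ : Finset V) S K) *ᵥ z = 0 := by
  constructor
  · rintro ⟨y, l, hy₀, hyl, hy⟩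
    refine ⟨y ∘ (↑), fun hz => hy₀ (funext fun v => ?_), l, ?_, ?_⟩
    · by_cases hv : v ∈ S
      · exact congrFun hz ⟨v, hv⟩
      · exact hy v (Finset.mem_compl.mpr hv)
    · rw [submatrix_mulVec_comp_val L _ hy, hyl]
      rfl
    · rw [submatrix_mulVec_comp_val L _ hy, hyl]
      funext v
      simp [hy v v.2]
  · rintro ⟨z, hz₀, μ, hzμ, hz⟩
    let y : V → K := Function.extend (↑) z 0
    have hyz : y ∘ (↑) = z := funext (Subtype.val_injective.extend_apply z 0)
    have hy (v) (hv : v ∈ Sᶜ) : y v = 0 :=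
      Function.extend_apply' _ _ _ fun ⟨u, hu⟩ => Finset.mem_compl.mp hv (hu ▸ u.2)
    refine ⟨y, μ, fun h => hz₀ (by rw [← hyz, h]; rfl), funext fun v => ?_, hy⟩
    by_cases hv : v ∈ S
    · have h := congrFun (submatrix_mulVec_comp_val L ((↑) : S → V) hy) ⟨v, hv⟩
      rw [hyz, hzμ, Pi.smul_apply, ← congrFun hyz ⟨v, hv⟩] at h
      exact h.symm
    · have h := congrFun (submatrix_mulVec_comp_val L ((↑) : (Sᶜ : Finset V) → V) hy)
        ⟨v, Finset.mem_compl.mpr hv⟩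
      rw [hyz, hz] at h
      rw [Pi.smul_apply, hy v (Finset.mem_compl.mpr hv), smul_zero]
      exact h.symm

end Matrix

theorem stmt_1_general {V : Type*} [Fintype V] [DecidableEq V] (G : SimpleGraph V) [DecidableRel G.Adj]
    (F : Finset V)
    (A : Matrix F F ℝ) (B : Matrix F (↥(Fᶜ : Finset V)) ℝ)
    (hA : A = (G.lapMatrix ℝ).submatrix Subtype.val Subtype.val)
    (hB : B = (G.lapMatrix ℝ).submatrix Subtype.val Subtype.val) :
    (Matrix.of fun (i : F) (p : Fin F.card × ↥(Fᶜ : Finset V)) =>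
        (A ^ (p.1 : ℕ) * B) i p.2).rank = F.card ↔
      ¬ ∃ (y : V → ℝ) (l : ℝ), y ≠ 0 ∧ (G.lapMatrix ℝ) *ᵥ y = l • y ∧
          ∀ v ∈ (Fᶜ : Finset V), y v = 0 := by
  have hL : (G.lapMatrix ℝ).IsSymm := G.isSymm_lapMatrix (R := ℝ)
  have hvecMulB (z : F → ℝ) :
      z ᵥ* B = ((G.lapMatrix ℝ).submatrix (↑) (↑) : Matrix (Fᶜ : Finset V) F ℝ) *ᵥ z := by
    rw [← vecMul_transpose, hB, transpose_submatrix, hL.eq]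
  have hKalman := (hA ▸ hL.submatrix _ : A.IsSymm).rank_controllabilityMatrix_eq_card_iff B
    (Fintype.card_coe F).le
  rw [Fintype.card_coe] at hKalman
  rw [Matrix.exists_eigenvector_vanishing_off_iff, ← hA]
  simp_rw [← hvecMulB]
  exact hKalman

/-- **Controllability of a graph under a leader set (Kalman condition ↔ eigenvector test).**
`F` is the follower set, `Fᶜ` the (nonempty) leader set, `A = L(G)_{F→F}`,
`B = L(G)_{F→Fᶜ}`.  The controllability matrix `[B, AB, …, A^{|F|−1}B]` has rank `|F|`
iff no eigenvector of the Laplacian vanishes identically on `Fᶜ`. -/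
theorem stmt_1 {V : Type*} [Fintype V] [DecidableEq V] (G : SimpleGraph V) [DecidableRel G.Adj]
    (F : Finset V) (hF : (Fᶜ : Finset V).Nonempty)
    (A : Matrix F F ℝ) (B : Matrix F (↥(Fᶜ : Finset V)) ℝ)
    (hA : A = (G.lapMatrix ℝ).submatrix Subtype.val Subtype.val)
    (hB : B = (G.lapMatrix ℝ).submatrix Subtype.val Subtype.val) :
    (Matrix.of fun (i : F) (p : Fin F.card × ↥(Fᶜ : Finset V)) =>
        (A ^ (p.1 : ℕ) * B) i p.2).rank = F.card ↔
      ¬ ∃ (y : V → ℝ) (l : ℝ), y ≠ 0 ∧ (G.lapMatrix ℝ) *ᵥ y = l • y ∧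
          ∀ v ∈ (Fᶜ : Finset V), y v = 0 :=
  stmt_1_general G F A B hA hB
end

section
/- Let G be a finite connected simple undirected graph on vertex set V and let S ⊆ V be a perfect critical set with |S| = k. Then for every vertex v ∈ V∖S, the number of neighbors of v inside S satisfies |N_S(v)| ≠ 1 and |N_S(v)| ≠ k − 1. -/
/-!
Let `y` be a Laplacian eigenvector supported exactly on `S` and `v ∉ S`. Row `v` of `L y = λ y`
says that the values of `y` on `N_S(v)` sum to `0`. Summing all rows shows `λ ∑ y = 0`, and if
`λ = 0` then `y` is constant on the connected graph, hence zero; so `y` also sums to `0` over `S`,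
and therefore over `S ∖ N_S(v)`. A sum of nonzero terms over a singleton is nonzero, so
neither `N_S(v)` nor `S ∖ N_S(v)` has exactly one element.
-/

open Matrix

/-- `S` is a perfect critical set of `G`: `S` is nonempty and some Laplacian eigenvector
vanishes at every vertex outside `S` and is nonzero at every vertex of `S`. -/
def IsPerfectCriticalSet {V : Type*} [Fintype V] [DecidableEq V]
    (G : SimpleGraph V) [DecidableRel G.Adj] (S : Finset V) : Prop :=
  S.Nonempty ∧ ∃ (y : V → ℝ) (l : ℝ), y ≠ 0 ∧ G.lapMatrix ℝ *ᵥ y = l • y ∧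
    (∀ v ∉ S, y v = 0) ∧ ∀ v ∈ S, y v ≠ 0

namespace Finset

variable {ι M : Type*} {s t : Finset ι} {f : ι → M}

theorem card_ne_one_of_sum_eq_zero [AddCommMonoid M] (hf : ∀ i ∈ s, f i ≠ 0)
    (hs : ∑ i ∈ s, f i = 0) : s.card ≠ 1 := by
  intro h
  obtain ⟨a, rfl⟩ := card_eq_one.mp h
  exact hf a (mem_singleton_self a) (by simpa using hs)

theorem card_ne_card_sub_one_of_sum_eq_zero [DecidableEq ι] [AddCommGroup M] (hts : t ⊆ s)
    (hs_ne : s.Nonempty) (hf : ∀ i ∈ s, f i ≠ 0) (hs : ∑ i ∈ s, f i = 0)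
    (ht : ∑ i ∈ t, f i = 0) :
    t.card ≠ s.card - 1 := by
  intro h
  have hdiff : (s \ t).card ≠ 1 :=
    card_ne_one_of_sum_eq_zero (fun i hi => hf i (mem_sdiff.mp hi).1)
      (by rw [sum_sdiff_eq_sub hts, hs, ht, sub_zero])
  have hs_pos := hs_ne.card_pos
  rw [card_sdiff_of_subset hts] at hdiff
  omega

end Finset

namespace SimpleGraph

variable {V : Type*} [Fintype V] [DecidableEq V] (G : SimpleGraph V) [DecidableRel G.Adj]

theorem sum_lapMatrix_mulVec {R : Type*} [CommRing R] (x : V → R) :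
    ∑ v, (G.lapMatrix R *ᵥ x) v = 0 := by
  have h : (fun _ => (1 : R)) ⬝ᵥ (G.lapMatrix R *ᵥ x) = 0 := by
    rw [dotProduct_mulVec, ← mulVec_transpose, (G.isSymm_lapMatrix (R := R)).eq,
      lapMatrix_mulVec_const_eq_zero, zero_dotProduct]
  simpa [dotProduct] using h

theorem sum_neighborFinset_eq_zero_of_lapMatrix_mulVec_eq_smul {R : Type*} [CommRing R]
    {x : V → R} {l : R} (hx : G.lapMatrix R *ᵥ x = l • x) {v : V} (hv : x v = 0) :
    ∑ u ∈ G.neighborFinset v, x u = 0 := by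
  have h := congrFun hx v
  rw [lapMatrix_mulVec_apply, Pi.smul_apply, hv] at h
  simpa using h

theorem sum_eq_zero_of_lapMatrix_mulVec_eq_smul (hG : G.Connected) {x : V → ℝ} {l : ℝ}
    (hx : G.lapMatrix ℝ *ᵥ x = l • x) {v : V} (hv : x v = 0) : ∑ u, x u = 0 := by
  by_cases hl : l = 0
  · rw [hl, zero_smul, lapMatrix_mulVec_eq_zero_iff_forall_reachable] at hx
    exact Finset.sum_eq_zero fun u _ => (hx u v (hG.preconnected u v)).trans hv
  · have h := G.sum_lapMatrix_mulVec x
    simp only [hx, Pi.smul_apply, smul_eq_mul, ← Finset.mul_sum] at h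
    exact (mul_eq_zero.mp h).resolve_left hl

end SimpleGraph

/-- **Lemma 1.** If `S` is a perfect critical `k`-set of a connected graph `G`, then every
vertex outside `S` has a number of neighbors in `S` different from `1` and from `k − 1`. -/
theorem stmt_5 {V : Type*} [Fintype V] [DecidableEq V] (G : SimpleGraph V) [DecidableRel G.Adj]
    (hconn : G.Connected) (S : Finset V) (k : ℕ) (hk : S.card = k)
    (hS : IsPerfectCriticalSet G S) :
    ∀ v ∉ S, (S.filter (fun u => G.Adj v u)).card ≠ 1 ∧
      (S.filter (fun u => G.Adj v u)).card ≠ k - 1 := by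
  obtain ⟨hne, y, l, -, heig, hout, hin⟩ := hS
  intro v hv
  have hsum_S : ∑ u ∈ S, y u = 0 := by
    rw [Finset.sum_subset S.subset_univ fun u _ hu => hout u hu]
    exact G.sum_eq_zero_of_lapMatrix_mulVec_eq_smul hconn heig (hout v hv)
  have hsum_N : ∑ u ∈ S.filter (fun u => G.Adj v u), y u = 0 := by
    rw [← G.sum_neighborFinset_eq_zero_of_lapMatrix_mulVec_eq_smul heig (hout v hv),
      SimpleGraph.neighborFinset_eq_filter, Finset.sum_filter, Finset.sum_filter,
      Finset.sum_subset S.subset_univ fun u _ hu => by simp [hout u hu]]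
  subst hk
  exact ⟨Finset.card_ne_one_of_sum_eq_zero (fun u hu => hin u (Finset.mem_filter.mp hu).1) hsum_N,
    Finset.card_ne_card_sub_one_of_sum_eq_zero (Finset.filter_subset _ S) hne hin hsum_S hsum_N⟩
end
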